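/- Let κ be an uncountable regular cardinal with κ^{<κ}=κ and let K be 2 or κ. A set A ⊆ K^κ with |A| > κ is a Lusin set for κ (i.e. a κ⁺-κ-Lusin set) if and only if A is κ⁺-concentrated on every dense set D ⊆ K^κ with |D| = κ. -/

import Mathlib

noncomputable section

open Cardinal Set

namespace GenSp

/-- The index set: a canonical type of order type `κ.ord`. -/
abbrev I (κ : Cardinal.{0}) : Type := κ.ord.ToType

variable (κ : Cardinal.{0}) (A : Type)

/-- The generalized space `A^κ`. -/
abbrev Sp : Type := I κ → A

/-- The basic clopen set `[x ↾ ξ]`: all functions agreeing with `x` below `ξ`. -/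
def cyl (x : Sp κ A) (ξ : I κ) : Set (Sp κ A) := {y | ∀ β < ξ, y β = x β}

/-- The bounded topology on `A^κ`, generated by the basic clopen sets. -/
def bt : TopologicalSpace (Sp κ A) :=
  .generateFrom {S | ∃ x ξ, S = cyl κ A x ξ}

/-- Open in the bounded topology. -/
def OpenK (s : Set (Sp κ A)) : Prop := @IsOpen _ (bt κ A) s

/-- Closed in the bounded topology. -/
def ClosedK (s : Set (Sp κ A)) : Prop := @IsClosed _ (bt κ A) s

/-- Nowhere dense in the bounded topology. -/
def NwdK (s : Set (Sp κ A)) : Prop := @IsNowhereDense _ (bt κ A) s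

/-- κ-meagre: a union of (at most) κ nowhere dense sets. -/
def MeagreK (s : Set (Sp κ A)) : Prop :=
  ∃ f : I κ → Set (Sp κ A), (∀ i, NwdK κ A (f i)) ∧ s = ⋃ i, f i

/-- κ-strongly null set. -/
def SNullK (S : Set (Sp κ A)) : Prop :=
  ∀ ξ : I κ → I κ, ∃ a : I κ → Sp κ A, S ⊆ ⋃ α, cyl κ A (a α) (ξ α)

/-- Coordinatewise addition over `ℤ₂` (translation by `x`). -/
def xadd (x y : Sp κ Bool) : Sp κ Bool := fun i => xor (x i) (y i)

/-- The covering number of the κ-meagre ideal. -/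
def covM : Cardinal :=
  sInf {c | ∃ 𝒜 : Set (Set (Sp κ A)), #𝒜 = c ∧ (∀ s ∈ 𝒜, MeagreK κ A s) ∧ ⋃₀ 𝒜 = Set.univ}

/-- The cofinality of the κ-meagre ideal. -/
def cofM : Cardinal :=
  sInf {c | ∃ 𝒜 : Set (Set (Sp κ A)), #𝒜 = c ∧ (∀ s ∈ 𝒜, MeagreK κ A s) ∧
    ∀ t, MeagreK κ A t → ∃ s ∈ 𝒜, t ⊆ s}

/-- κ is weakly compact: uncountable and with the partition property κ → (κ)²₂. -/
def IsWeaklyCompact (κ : Cardinal.{0}) : Prop :=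
  ℵ₀ < κ ∧ ∀ c : I κ → I κ → Bool, ∃ H : Set (I κ), #H = κ ∧
    ∃ b : Bool, ∀ i ∈ H, ∀ j ∈ H, i < j → c i j = b

/-- `S` is κ-meagre relative to `P` (in the subspace topology). -/
def MeagreInK (P S : Set (Sp κ A)) : Prop :=
  ∃ f : I κ → Set P,
    (∀ i, @IsNowhereDense _ (TopologicalSpace.induced Subtype.val (bt κ A)) (f i)) ∧
    {x : P | (x : Sp κ A) ∈ S} = ⋃ i, f i

/-- Perfect set in the bounded topology. -/
def PerfK (P : Set (Sp κ A)) : Prop := @Perfect _ (bt κ A) P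

/-- Perfectly κ-meagre set. -/
def PMeagreK (S : Set (Sp κ A)) : Prop := ∀ P, PerfK κ A P → MeagreInK κ A P S

/-- κ-λ-set. -/
def KLambdaSet (S : Set (Sp κ A)) : Prop :=
  ∀ B ⊆ S, #B ≤ κ → ∃ G : I κ → Set (Sp κ A),
    (∀ i, OpenK κ A (G i)) ∧ (⋂ i, G i) ∩ S = B

/-- κ-σ-set. -/
def KSigmaSet (S : Set (Sp κ A)) : Prop :=
  ∀ F : I κ → Set (Sp κ A), (∀ i, ClosedK κ A (F i)) →
    ∃ G : I κ → Set (Sp κ A), (∀ i, OpenK κ A (G i)) ∧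
      S ∩ (⋃ i, F i) = S ∩ (⋂ i, G i)

/-- κ-γ-set: every open (proper) κ-cover contains a κ-γ-subcover of size κ. -/
def KGammaSet (X : Set (Sp κ A)) : Prop :=
  ∀ 𝒰 : Set (Set (Sp κ A)), (∀ U ∈ 𝒰, OpenK κ A U) → X ∉ 𝒰 →
    (∀ C ⊆ X, #C < κ → ∃ U ∈ 𝒰, C ⊆ U) →
    ∃ U : I κ → Set (Sp κ A), (∀ α, U α ∈ 𝒰) ∧
      X ⊆ ⋃ α, ⋂ β, ⋂ (_ : α < β), U β

/-- A (proper) open cover of `X` of size κ, indexed by `I κ`. -/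
def IsOCovSeq (X : Set (Sp κ A)) (U : I κ → Set (Sp κ A)) : Prop :=
  (∀ α, OpenK κ A (U α)) ∧ (∀ α, U α ≠ X) ∧ X ⊆ ⋃ α, U α

/-- A (proper) κ-γ-cover of `X`, indexed by `I κ`. -/
def IsGammaCovSeq (X : Set (Sp κ A)) (U : I κ → Set (Sp κ A)) : Prop :=
  (∀ α, OpenK κ A (U α)) ∧ (∀ α, U α ≠ X) ∧
    X ⊆ ⋃ α, ⋂ β, ⋂ (_ : α < β), U β

/-- The cover `U` is essentially of size κ: no subfamily of size `< κ` covers `X`. -/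
def EssK (X : Set (Sp κ A)) (U : I κ → Set (Sp κ A)) : Prop :=
  ∀ s : Set (I κ), #s < κ → ¬ X ⊆ ⋃ β ∈ s, U β

/-- The selection principle `S₁^κ(Γ_κ, Γ_κ)`. -/
def S1GammaGamma (X : Set (Sp κ A)) : Prop :=
  ∀ 𝒰 : I κ → I κ → Set (Sp κ A), (∀ α, IsGammaCovSeq κ A X (𝒰 α)) →
    ∃ f : I κ → I κ, IsGammaCovSeq κ A X (fun α => 𝒰 α (f α))

/-- The κ-Hurewicz property `U^κ_{<κ}(O_κ, Γ_κ)`. -/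
def KHurewicz (X : Set (Sp κ A)) : Prop :=
  ∀ 𝒰 : I κ → I κ → Set (Sp κ A), (∀ α, IsOCovSeq κ A X (𝒰 α)) →
    (∀ α, EssK κ A X (𝒰 α)) →
    ∃ V : I κ → Set (I κ), (∀ α, #(V α) < κ) ∧
      IsGammaCovSeq κ A X (fun α => ⋃ β ∈ V α, 𝒰 α β)

/-- The κ-Menger property `U^κ_{<κ}(O_κ, O_κ)`. -/
def KMenger (X : Set (Sp κ A)) : Prop :=
  ∀ 𝒰 : I κ → I κ → Set (Sp κ A), (∀ α, IsOCovSeq κ A X (𝒰 α)) →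
    (∀ α, EssK κ A X (𝒰 α)) →
    ∃ V : I κ → Set (I κ), (∀ α, #(V α) < κ) ∧
      IsOCovSeq κ A X (fun α => ⋃ β ∈ V α, 𝒰 α β)

/-- The κ-Rothberger property `S₁^κ(O_κ, O_κ)`. -/
def KRothberger (X : Set (Sp κ A)) : Prop :=
  ∀ 𝒰 : I κ → I κ → Set (Sp κ A), (∀ α, IsOCovSeq κ A X (𝒰 α)) →
    ∃ f : I κ → I κ, IsOCovSeq κ A X (fun α => 𝒰 α (f α))

/-- Closed unbounded subset of `I κ`. -/
def IsClubK (S : Set (I κ)) : Prop :=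
  (∀ a : I κ, ∃ b ∈ S, a < b) ∧
  (∀ a : I κ, (∃ b, b < a) → (∀ b < a, ∃ c ∈ S, b < c ∧ c < a) → a ∈ S)

/-- Stationary subset of `I κ`. -/
def IsStatK (S : Set (I κ)) : Prop :=
  ∀ C : Set (I κ), IsClubK κ C → (S ∩ C).Nonempty

/-- The diamond principle `◇_κ(E)`. -/
def DiamondK (E : Set (I κ)) : Prop :=
  ∃ s : I κ → Set (I κ), (∀ α, s α ⊆ Iio α) ∧
    ∀ X : Set (I κ), IsStatK κ {α | α ∈ E ∧ X ∩ Iio α = s α}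

/-- The guessing principle `◇_κ(E, 2^κ, NS_κ)`. -/
def DiamondFunK (E : Set (I κ)) : Prop :=
  ∃ s : I κ → Sp κ Bool,
    ∀ x : Sp κ Bool, IsStatK κ {α | α ∈ E ∧ ∀ β < α, x β = s α β}

/-- `S` is `X`-small. -/
def XSmall (X : Set (I κ)) (S : Set (Sp κ A)) : Prop :=
  ∃ a : I κ → Sp κ A, S ⊆ ⋃ α ∈ X, cyl κ A (a α) α

/-- `S` is small in `A^κ`. -/
def SmallK (S : Set (Sp κ A)) : Prop :=
  ∃ lam : Cardinal, lam < κ ∧ ∀ α : I κ, ∃ T : Set (Sp κ A),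
    #T ≤ lam ∧ S ⊆ ⋃ x ∈ T, cyl κ A x α

end GenSp

/-! Every dense open set `G` contains a dense set of size exactly `κ`: one point of `G` in each of
the `κ^{<κ} = κ` basic cylinders, together with `κ` further points of `G`. So being
`κ⁺`-concentrated on all dense sets of size `κ` says that `L` has at most `κ` points outside each
dense open set, i.e. inside each closed nowhere dense set. Since a `κ`-meagre set is covered by `κ`
closures of nowhere dense sets, this is the Lusin property. -/

theorem TopologicalSpace.IsTopologicalBasis.exists_dense_subset_mk_le {X : Type*}
    [TopologicalSpace X] {B : Set (Set X)} (hB : TopologicalSpace.IsTopologicalBasis B)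
    {G : Set X} (hG : Dense G) :
    ∃ D ⊆ G, Dense D ∧ #D ≤ #B := by
  have hpt : ∀ S : {S : B // (S : Set X).Nonempty}, ((S : Set X) ∩ G).Nonempty := fun S =>
    hG.inter_open_nonempty _ (hB.isOpen S.1.2) S.2
  choose p hp using hpt
  refine ⟨range p, range_subset_iff.2 fun S => (hp S).2, hB.dense_iff.2 ?_, ?_⟩
  · exact fun S hSB hS => ⟨p ⟨⟨S, hSB⟩, hS⟩, (hp ⟨⟨S, hSB⟩, hS⟩).1, mem_range_self _⟩
  · exact mk_range_le.trans (mk_subtype_le _)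

namespace GenSp

section BoundedTopology

variable {κ : Cardinal.{0}} {A : Type}

attribute [local instance] bt

lemma infinite_I (hκ : ℵ₀ ≤ κ) : Infinite (I κ) :=
  Cardinal.infinite_iff.2 ((mk_ord_toType κ).symm ▸ hκ)

lemma mk_Iio_I_lt (ξ : I κ) : #(Iio ξ) < κ := by
  simpa using mk_Iio_lt ξ

lemma mk_iUnion_le_of_le (hκ : ℵ₀ ≤ κ) {α : Type} {f : I κ → Set α} (hf : ∀ i, #(f i) ≤ κ) :
    #(⋃ i, f i) ≤ κ :=
  calc #(⋃ i, f i) ≤ #(I κ) * ⨆ i, #(f i) := mk_iUnion_le f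
    _ ≤ κ * κ := mul_le_mul' (mk_ord_toType κ).le (ciSup_le' hf)
    _ = κ := mul_eq_self hκ

lemma mem_cyl_self (x : Sp κ A) (ξ : I κ) : x ∈ cyl κ A x ξ := fun _ _ => rfl

lemma isOpen_cyl (x : Sp κ A) (ξ : I κ) : IsOpen (cyl κ A x ξ) :=
  TopologicalSpace.isOpen_generateFrom_of_mem ⟨x, ξ, rfl⟩

lemma isTopologicalBasis_cyl [Nonempty (I κ)] :
    TopologicalSpace.IsTopologicalBasis {S : Set (Sp κ A) | ∃ x ξ, S = cyl κ A x ξ} := by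
  refine ⟨?_, ?_, rfl⟩
  · rintro _ ⟨x, ξ, rfl⟩ _ ⟨y, η, rfl⟩ z ⟨hzx, hzy⟩
    refine ⟨cyl κ A z (max ξ η), ⟨z, _, rfl⟩, mem_cyl_self z _, fun w hw => ⟨?_, ?_⟩⟩
    · exact fun β hβ => (hw β (hβ.trans_le (le_max_left ξ η))).trans (hzx β hβ)
    · exact fun β hβ => (hw β (hβ.trans_le (le_max_right ξ η))).trans (hzy β hβ)
  · obtain ⟨ξ⟩ := ‹Nonempty (I κ)›
    exact sUnion_eq_univ_iff.2 fun x => ⟨cyl κ A x ξ, ⟨x, ξ, rfl⟩, mem_cyl_self x ξ⟩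

/-- A cylinder `[x ↾ ξ]` depends only on `x ↾ ξ ∈ A^ξ`, and there are `κ^{<κ}` such restrictions. -/
lemma mk_cyls_le (hκ : ℵ₀ ≤ κ) (hpow : κ ^< κ = κ) (hA : #A ≤ κ) :
    #{S : Set (Sp κ A) | ∃ x ξ, S = cyl κ A x ξ} ≤ κ := by
  let cylOf (ξ : I κ) (g : Iio ξ → A) : Set (Sp κ A) := {y | ∀ β : Iio ξ, y β = g β}
  have hsub : {S : Set (Sp κ A) | ∃ x ξ, S = cyl κ A x ξ} ⊆ ⋃ ξ, range (cylOf ξ) := by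
    rintro _ ⟨x, ξ, rfl⟩
    exact mem_iUnion.2
      ⟨ξ, fun β => x β, ext fun y => ⟨fun hy β hβ => hy ⟨β, hβ⟩, fun hy β => hy β β.2⟩⟩
  refine (mk_le_mk_of_subset hsub).trans (mk_iUnion_le_of_le hκ fun ξ => ?_)
  calc #(range (cylOf ξ)) ≤ #(Iio ξ → A) := mk_range_le
    _ = #A ^ #(Iio ξ) := by rw [mk_arrow, lift_id, lift_id]
    _ ≤ κ ^ #(Iio ξ) := power_le_power_right hA
    _ ≤ κ ^< κ := le_powerlt κ (mk_Iio_I_lt ξ)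
    _ = κ := hpow

/-- Changing `x` at one coordinate `γ ≥ ξ` stays inside `[x ↾ ξ]`, and there are `κ` such `γ`. -/
lemma le_mk_cyl (hκ : ℵ₀ ≤ κ) [Nontrivial A] (x : Sp κ A) (ξ : I κ) : κ ≤ #(cyl κ A x ξ) := by
  have := infinite_I hκ
  have hIci : #(Ici ξ) = κ := by
    rw [← compl_Iio, mk_compl_of_infinite _ ((mk_Iio_I_lt ξ).trans_eq (mk_ord_toType κ).symm),
      mk_ord_toType]
  choose b hb using fun a : A => exists_ne a
  let p : Ici ξ → cyl κ A x ξ := fun γ =>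
    ⟨Function.update x γ (b (x γ)), fun β hβ => Function.update_of_ne (hβ.trans_le γ.2).ne _ _⟩
  have hp : Function.Injective p := by
    intro γ δ hγδ
    by_contra hne
    have hval := congrArg (fun y : cyl κ A x ξ => (y : Sp κ A) γ) hγδ
    simp only [p, Function.update_self, Function.update_of_ne (Subtype.coe_ne_coe.2 hne)] at hval
    exact hb _ hval
  exact hIci.symm.le.trans (mk_le_of_injective hp)

lemma le_mk_of_isOpen (hκ : ℵ₀ ≤ κ) [Nontrivial A] {U : Set (Sp κ A)} (hU : IsOpen U)
    (hne : U.Nonempty) : κ ≤ #U := by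
  have := infinite_I hκ
  obtain ⟨z, hz⟩ := hne
  obtain ⟨_, ⟨x, ξ, rfl⟩, -, hsub⟩ := isTopologicalBasis_cyl.exists_subset_of_mem_open hz hU
  exact (le_mk_cyl hκ x ξ).trans (mk_le_mk_of_subset hsub)

lemma exists_dense_subset_mk_eq (hκ : ℵ₀ ≤ κ) (hpow : κ ^< κ = κ) [Nontrivial A] (hA : #A ≤ κ)
    {G : Set (Sp κ A)} (hGo : IsOpen G) (hGd : Dense G) : ∃ D ⊆ G, Dense D ∧ #D = κ := by
  have := infinite_I hκ
  obtain ⟨D, hDG, hDd, hDκ⟩ := isTopologicalBasis_cyl.exists_dense_subset_mk_le hGd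
  obtain ⟨P, hPG, hPκ⟩ := le_mk_iff_exists_subset.1 (le_mk_of_isOpen hκ hGo hGd.nonempty)
  refine ⟨D ∪ P, union_subset hDG hPG, hDd.mono subset_union_left, le_antisymm ?_ ?_⟩
  · calc #(D ∪ P : Set _) ≤ #D + #P := mk_union_le D P
      _ ≤ κ + κ := add_le_add (hDκ.trans (mk_cyls_le hκ hpow hA)) hPκ.le
      _ = κ := add_eq_self hκ
  · exact hPκ.symm.le.trans (mk_le_mk_of_subset subset_union_right)

lemma meagreK_of_isNowhereDense [Nonempty (I κ)] {s : Set (Sp κ A)} (hs : IsNowhereDense s) :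
    MeagreK κ A s :=
  ⟨fun _ => s, fun _ => hs, (iUnion_const s).symm⟩

end BoundedTopology

theorem stmt8_general (κ : Cardinal.{0}) (hk : Cardinal.aleph0 < κ) (hpow : κ ^< κ = κ)
    (A : Type) (hA : #A = 2 ∨ #A = κ)
    (L : Set (Sp κ A)) :
    (∀ X, MeagreK κ A X → #↥(L ∩ X) ≤ κ) ↔
      (∀ D : Set (Sp κ A), @Dense _ (bt κ A) D → #D = κ →
        ∀ G, OpenK κ A G → D ⊆ G → #↥(L \ G) ≤ κ) := by
  let := bt κ A
  have := infinite_I hk.le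
  have h2κ : (2 : Cardinal) ≤ κ := (natCast_lt_aleph0 (n := 2)).le.trans hk.le
  obtain ⟨h2A, hAκ⟩ : 2 ≤ #A ∧ #A ≤ κ := by
    rcases hA with h | h <;> rw [h]
    exacts [⟨le_rfl, h2κ⟩, ⟨h2κ, le_rfl⟩]
  have : Nontrivial A := one_lt_iff_nontrivial.1 (lt_of_lt_of_le (by norm_num) h2A)
  constructor
  · intro hL D hDd _ G hGo hDG
    have hGc : IsNowhereDense Gᶜ :=
      (isClosed_isNowhereDense_iff_compl.2 (by rw [compl_compl]; exact ⟨hGo, hDd.mono hDG⟩)).2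
    exact hL Gᶜ (meagreK_of_isNowhereDense hGc)
  · rintro hL _ ⟨f, hf, rfl⟩
    rw [inter_iUnion]
    refine mk_iUnion_le_of_le hk.le fun i => ?_
    have hsub : L ∩ f i ⊆ L \ (closure (f i))ᶜ := fun x hx =>
      ⟨hx.1, not_not.2 (subset_closure hx.2)⟩
    have hGo : IsOpen (closure (f i))ᶜ := isClosed_closure.isOpen_compl
    obtain ⟨D, hDG, hDd, hDκ⟩ :=
      exists_dense_subset_mk_eq hk.le hpow hAκ hGo (interior_eq_empty_iff_dense_compl.1 (hf i))
    exact (mk_le_mk_of_subset hsub).trans (hL D hDd hDκ _ hGo hDG)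

theorem stmt8 (κ : Cardinal.{0}) (hk : Cardinal.aleph0 < κ) (hreg : κ.IsRegular) (hpow : κ ^< κ = κ)
    (A : Type) (hA : #A = 2 ∨ #A = κ)
    (L : Set (Sp κ A)) (hL : κ < #L) :
    (∀ X, MeagreK κ A X → #↥(L ∩ X) ≤ κ) ↔
      (∀ D : Set (Sp κ A), @Dense _ (bt κ A) D → #D = κ →
        ∀ G, OpenK κ A G → D ⊆ G → #↥(L \ G) ≤ κ) :=
  stmt8_general κ hk hpow A hA L

end GenSp
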